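/- arXiv:1812.06794 — 3 statements merged into one kernel-verified Lean document; each statement's English description precedes it below -/
import Mathlib

section
/- Let a < b, n0, n1, n2 ∈ ℕ, and let B ∈ ℝ^{(n1+2n2)×(2n1+4n2)} be such that BT is invertible. Let x = (x0, x1, x2) ∈ X with fundamental state x̂ = (x0, x1', x2''). Then for almost every s ∈ [a,b], (x1'(s), x2'(s)) = G3(s) x̂(s) + ∫ₐˢ G4(s,θ) x̂(θ) dθ + ∫ₛᵇ G5(s,θ) x̂(θ) dθ, i.e., (x1', x2') = ℋ x̂ in L²([a,b];ℝ^{n1+n2}). -/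
open MeasureTheory Set Matrix ENNReal

noncomputable section

/-- Boundary-full index: blocks for x1(a), x1(b), x2(a), x2(b), x2'(a), x2'(b). -/
abbrev BfI (n1 n2 : ℕ) : Type := Fin n1 ⊕ Fin n1 ⊕ Fin n2 ⊕ Fin n2 ⊕ Fin n2 ⊕ Fin n2
/-- Boundary-core index: blocks for x1(a), x2(a), x2'(a). -/
abbrev BcI (n1 n2 : ℕ) : Type := Fin n1 ⊕ Fin n2 ⊕ Fin n2
/-- State index: blocks for the (x0, x1, x2) components. -/
abbrev StI (n0 n1 n2 : ℕ) : Type := Fin n0 ⊕ Fin n1 ⊕ Fin n2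
/-- First-derivative index: blocks for (x1', x2'). -/
abbrev D1I (n1 n2 : ℕ) : Type := Fin n1 ⊕ Fin n2

/-- The matrix T with block rows [I,0,0],[I,0,0],[0,I,0],[0,I,(b-a)I],[0,0,I],[0,0,I]. -/
def Tmat (n1 n2 : ℕ) (a b : ℝ) : Matrix (BfI n1 n2) (BcI n1 n2) ℝ :=
  Matrix.of fun r c =>
    match r, c with
    | .inl i, .inl j => if i = j then 1 else 0
    | .inr (.inl i), .inl j => if i = j then 1 else 0
    | .inr (.inr (.inl i)), .inr (.inl j) => if i = j then 1 else 0
    | .inr (.inr (.inr (.inl i))), .inr (.inl j) => if i = j then 1 else 0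
    | .inr (.inr (.inr (.inl i))), .inr (.inr j) => if i = j then b - a else 0
    | .inr (.inr (.inr (.inr (.inl i)))), .inr (.inr j) => if i = j then 1 else 0
    | .inr (.inr (.inr (.inr (.inr i)))), .inr (.inr j) => if i = j then 1 else 0
    | _, _ => 0

/-- Q(θ) with block rows [0,0,0],[0,I,0],[0,0,0],[0,0,(b-θ)I],[0,0,0],[0,0,I]. -/
def Qmat (n0 n1 n2 : ℕ) (b θ : ℝ) : Matrix (BfI n1 n2) (StI n0 n1 n2) ℝ :=
  Matrix.of fun r c =>
    match r, c with
    | .inr (.inl i), .inr (.inl j) => if i = j then 1 else 0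
    | .inr (.inr (.inr (.inl i))), .inr (.inr j) => if i = j then b - θ else 0
    | .inr (.inr (.inr (.inr (.inr i)))), .inr (.inr j) => if i = j then 1 else 0
    | _, _ => 0

/-- K(s) with block rows [0,0,0],[I,0,0],[0,I,(s-a)I]. -/
def Kmat (n0 n1 n2 : ℕ) (a s : ℝ) : Matrix (StI n0 n1 n2) (BcI n1 n2) ℝ :=
  Matrix.of fun r c =>
    match r, c with
    | .inr (.inl i), .inl j => if i = j then 1 else 0
    | .inr (.inr i), .inr (.inl j) => if i = j then 1 else 0
    | .inr (.inr i), .inr (.inr j) => if i = j then s - a else 0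
    | _, _ => 0

/-- V = [[0,0,0],[0,0,I]]. -/
def Vmat (n1 n2 : ℕ) : Matrix (D1I n1 n2) (BcI n1 n2) ℝ :=
  Matrix.of fun r c =>
    match r, c with
    | .inr i, .inr (.inr j) => if i = j then 1 else 0
    | _, _ => 0

/-- G0 = [[I,0,0],[0,0,0],[0,0,0]]. -/
def G0mat (n0 n1 n2 : ℕ) : Matrix (StI n0 n1 n2) (StI n0 n1 n2) ℝ :=
  Matrix.of fun r c =>
    match r, c with
    | .inl i, .inl j => if i = j then 1 else 0
    | _, _ => 0

/-- L1(s,θ) = [[0,0,0],[0,I,0],[0,0,(s-θ)I]]. -/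
def L1mat (n0 n1 n2 : ℕ) (s θ : ℝ) : Matrix (StI n0 n1 n2) (StI n0 n1 n2) ℝ :=
  Matrix.of fun r c =>
    match r, c with
    | .inr (.inl i), .inr (.inl j) => if i = j then 1 else 0
    | .inr (.inr i), .inr (.inr j) => if i = j then s - θ else 0
    | _, _ => 0

/-- G3 = [[0,I,0],[0,0,0]]. -/
def G3mat (n0 n1 n2 : ℕ) : Matrix (D1I n1 n2) (StI n0 n1 n2) ℝ :=
  Matrix.of fun r c =>
    match r, c with
    | .inl i, .inr (.inl j) => if i = j then 1 else 0
    | _, _ => 0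

/-- L4 = [[0,0,0],[0,0,I]]. -/
def L4mat (n0 n1 n2 : ℕ) : Matrix (D1I n1 n2) (StI n0 n1 n2) ℝ :=
  Matrix.of fun r c =>
    match r, c with
    | .inr i, .inr (.inr j) => if i = j then 1 else 0
    | _, _ => 0

/-- G2(s,θ) = -K(s) (BT)⁻¹ B Q(θ). -/
def G2fun (n0 n1 n2 : ℕ) (a b : ℝ) (B : Matrix (BcI n1 n2) (BfI n1 n2) ℝ) (s θ : ℝ) :
    Matrix (StI n0 n1 n2) (StI n0 n1 n2) ℝ :=
  -(Kmat n0 n1 n2 a s * ((B * Tmat n1 n2 a b)⁻¹ * (B * Qmat n0 n1 n2 b θ)))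

/-- G1(s,θ) = L1(s,θ) + G2(s,θ). -/
def G1fun (n0 n1 n2 : ℕ) (a b : ℝ) (B : Matrix (BcI n1 n2) (BfI n1 n2) ℝ) (s θ : ℝ) :
    Matrix (StI n0 n1 n2) (StI n0 n1 n2) ℝ :=
  L1mat n0 n1 n2 s θ + G2fun n0 n1 n2 a b B s θ

/-- G5(s,θ) = -V (BT)⁻¹ B Q(θ). -/
def G5fun (n0 n1 n2 : ℕ) (a b : ℝ) (B : Matrix (BcI n1 n2) (BfI n1 n2) ℝ) (_s θ : ℝ) :
    Matrix (D1I n1 n2) (StI n0 n1 n2) ℝ :=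
  -(Vmat n1 n2 * ((B * Tmat n1 n2 a b)⁻¹ * (B * Qmat n0 n1 n2 b θ)))

/-- G4(s,θ) = L4 + G5(s,θ). -/
def G4fun (n0 n1 n2 : ℕ) (a b : ℝ) (B : Matrix (BcI n1 n2) (BfI n1 n2) ℝ) (s θ : ℝ) :
    Matrix (D1I n1 n2) (StI n0 n1 n2) ℝ :=
  L4mat n0 n1 n2 + G5fun n0 n1 n2 a b B s θ

/-- The 3-PI (partial integral) operator with multiplier M0 and kernels M1 (below
the diagonal) and M2 (above the diagonal) on the interval [a,b]. -/
def PIop {ι κ : Type*} [Fintype ι] [Fintype κ] (a b : ℝ)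
    (M0 : ℝ → Matrix κ ι ℝ) (M1 M2 : ℝ → ℝ → Matrix κ ι ℝ)
    (x : ℝ → ι → ℝ) : ℝ → κ → ℝ := fun s =>
  (M0 s).mulVec (x s) + (∫ θ in a..s, (M1 s θ).mulVec (x θ)) +
    ∫ θ in s..b, (M2 s θ).mulVec (x θ)

/-- The unitary operator 𝒯 = P_{G0,G1,G2}. -/
def Tcal (n0 n1 n2 : ℕ) (a b : ℝ) (B : Matrix (BcI n1 n2) (BfI n1 n2) ℝ)
    (x : ℝ → StI n0 n1 n2 → ℝ) : ℝ → StI n0 n1 n2 → ℝ :=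
  PIop a b (fun _ => G0mat n0 n1 n2) (G1fun n0 n1 n2 a b B) (G2fun n0 n1 n2 a b B) x

/-- The operator ℋ = P_{G3,G4,G5}. -/
def Hcal (n0 n1 n2 : ℕ) (a b : ℝ) (B : Matrix (BcI n1 n2) (BfI n1 n2) ℝ)
    (x : ℝ → StI n0 n1 n2 → ℝ) : ℝ → D1I n1 n2 → ℝ :=
  PIop a b (fun _ => G3mat n0 n1 n2) (G4fun n0 n1 n2 a b B) (G5fun n0 n1 n2 a b B) x

/-- Stacking three component functions into a single state function. -/
def stack3 {n0 n1 n2 : ℕ} (x0 : ℝ → Fin n0 → ℝ) (x1 : ℝ → Fin n1 → ℝ)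
    (x2 : ℝ → Fin n2 → ℝ) : ℝ → StI n0 n1 n2 → ℝ :=
  fun s => Sum.elim (x0 s) (Sum.elim (x1 s) (x2 s))

/-- The vector of full boundary values (x1(a), x1(b), x2(a), x2(b), x2'(a), x2'(b)). -/
def bfvec {n1 n2 : ℕ} (x1 : ℝ → Fin n1 → ℝ) (x2 x2' : ℝ → Fin n2 → ℝ) (a b : ℝ) :
    BfI n1 n2 → ℝ :=
  Sum.elim (x1 a) (Sum.elim (x1 b) (Sum.elim (x2 a) (Sum.elim (x2 b)
    (Sum.elim (x2' a) (x2' b)))))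

/-- x1 is of Sobolev class H¹ on [a,b] with derivative x1' ∈ L². -/
def IsH1 (a b : ℝ) {n : ℕ} (x1 x1' : ℝ → Fin n → ℝ) : Prop :=
  MemLp x1' 2 (volume.restrict (Icc a b)) ∧
    ∀ s ∈ Icc a b, x1 s = x1 a + ∫ η in a..s, x1' η

/-- x2 is of Sobolev class H² on [a,b] with first derivative x2' and second
derivative x2'' ∈ L². -/
def IsH2 (a b : ℝ) {n : ℕ} (x2 x2' x2'' : ℝ → Fin n → ℝ) : Prop :=
  (∀ s ∈ Icc a b, x2 s = x2 a + ∫ η in a..s, x2' η) ∧ IsH1 a b x2' x2''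

/-- Membership of (x0,x1,x2) (with derivative data x1', x2', x2'') in the space X. -/
def InX (a b : ℝ) {n0 n1 n2 : ℕ} (B : Matrix (BcI n1 n2) (BfI n1 n2) ℝ)
    (x0 : ℝ → Fin n0 → ℝ) (x1 x1' : ℝ → Fin n1 → ℝ) (x2 x2' x2'' : ℝ → Fin n2 → ℝ) : Prop :=
  MemLp x0 2 (volume.restrict (Icc a b)) ∧ IsH1 a b x1 x1' ∧ IsH2 a b x2 x2' x2'' ∧
    B.mulVec (bfvec x1 x2 x2' a b) = 0

/-- The L² inner product on [a,b]. -/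
def L2inner {n : ℕ} (a b : ℝ) (u v : ℝ → Fin n → ℝ) : ℝ :=
  ∫ s in a..b, u s ⬝ᵥ v s

/-- The L² inner product on [a,b] for state-indexed functions. -/
def L2innerSt {n0 n1 n2 : ℕ} (a b : ℝ) (u v : ℝ → StI n0 n1 n2 → ℝ) : ℝ :=
  ∫ s in a..b, u s ⬝ᵥ v s

/-!
Integrating the fundamental state `x̂ = (x0, x1', x2'')` against `Q` recovers the boundary
data: `x_bf = T (x1(a), x2(a), x2'(a)) + ∫ₐᵇ Q(θ) x̂(θ) dθ`, the `x2(b)` row being the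
first-order Taylor formula with integral remainder `∫ₐᵇ (b - θ) x2''(θ) dθ`. Applying `B`, the
boundary condition `B x_bf = 0` and the invertibility of `BT` give
`(BT)⁻¹ B ∫ₐᵇ Q x̂ = -(x1(a), x2(a), x2'(a))`, hence `∫ₐᵇ G5 x̂ = (0, x2'(a))`. Since
`G4 = [[0,0,0],[0,0,I]] + G5`, the two integrals of `ℋ x̂ (s)` combine into
`(0, ∫ₐˢ x2'') + ∫ₐᵇ G5 x̂`, and with `G3 x̂(s) = (x1'(s), 0)` this is
`(x1'(s), x2'(a) + ∫ₐˢ x2'') = (x1'(s), x2'(s))` at every `s ∈ [a, b]`.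
-/

section Integration

variable {E : Type*} [NormedAddCommGroup E] [NormedSpace ℝ E] [CompleteSpace E]

theorem intervalIntegral.eval_integral {ι : Type*} [Fintype ι] {f : ℝ → ι → E} {μ : Measure ℝ}
    {c d : ℝ} (hf : IntervalIntegrable f μ c d) (i : ι) :
    (∫ θ in c..d, f θ ∂μ) i = ∫ θ in c..d, f θ i ∂μ :=
  ((ContinuousLinearMap.proj (R := ℝ) (φ := fun _ : ι => E) i).intervalIntegral_comp_comm
    hf).symm

theorem Matrix.mulVec_intervalIntegral {m n : Type*} [Fintype m] [Fintype n]
    (M : Matrix m n ℝ) {f : ℝ → n → ℝ} {μ : Measure ℝ} {c d : ℝ}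
    (hf : IntervalIntegrable f μ c d) :
    M *ᵥ ∫ θ in c..d, f θ ∂μ = ∫ θ in c..d, M *ᵥ f θ ∂μ :=
  (M.mulVecLin.toContinuousLinearMap.intervalIntegral_comp_comm hf).symm

theorem ContinuousOn.integrableOn_mulVec {X m n : Type*} [TopologicalSpace X]
    [T2Space X] [MeasurableSpace X] [OpensMeasurableSpace X] {μ : Measure X} [Fintype m]
    [Fintype n] {K : Set X} {M : X → Matrix m n ℝ} {x : X → n → ℝ} (hM : ContinuousOn M K)
    (hx : IntegrableOn x K μ) (hK : IsCompact K) :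
    IntegrableOn (fun θ => M θ *ᵥ x θ) K μ := by
  refine integrable_pi_iff.2 fun i => integrable_finsetSum _ fun j _ => ?_
  exact IntegrableOn.continuousOn_mul ((continuous_apply j).comp_continuousOn
    ((continuous_apply i).comp_continuousOn hM)) (integrable_pi_iff.1 hx j) hK

theorem integral_primitive_eq_integral_sub_smul {f : ℝ → E} {a b : ℝ} (hab : a ≤ b)
    (hf : IntegrableOn f (Icc a b)) :
    ∫ θ in a..b, ∫ η in a..θ, f η = ∫ η in a..b, (b - η) • f η := by
  set ν := volume.restrict (Ioc a b)
  have : IsFiniteMeasure ν := ⟨by simp [ν]⟩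
  set F : ℝ × ℝ → E := {p | p.2 ≤ p.1}.indicator fun p => f p.2
  have hF : Integrable F (ν.prod ν) :=
    ((hf.mono_set Ioc_subset_Icc_self).comp_snd ν).indicator
      (measurableSet_le measurable_snd measurable_fst)
  have hinner : ∀ θ ∈ Ioc a b, ∫ η in a..θ, f η = ∫ η, F (θ, η) ∂ν := fun θ hθ => by
    have : (fun η => F (θ, η)) = (Iic θ).indicator f := by
      ext η; by_cases h : η ≤ θ <;> simp [F, h]
    rw [this, setIntegral_indicator measurableSet_Iic, Ioc_inter_Iic, min_eq_right hθ.2,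
      intervalIntegral.integral_of_le hθ.1.le]
  have houter : ∀ η ∈ Ioc a b, (b - η) • f η = ∫ θ, F (θ, η) ∂ν := fun η hη => by
    have : (fun θ => F (θ, η)) = (Ici η).indicator fun _ => f η := by
      ext θ; by_cases h : η ≤ θ <;> simp [F, h]
    have hset : Ioc a b ∩ Ici η = Icc η b := by
      ext θ; simp only [mem_inter_iff, mem_Ioc, mem_Ici, mem_Icc]; grind [hη.1]
    rw [this, setIntegral_indicator measurableSet_Ici, hset, setIntegral_const,
      Real.volume_real_Icc_of_le hη.2]
  rw [intervalIntegral.integral_of_le hab, intervalIntegral.integral_of_le hab,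
    setIntegral_congr_fun measurableSet_Ioc hinner,
    setIntegral_congr_fun measurableSet_Ioc houter]
  exact integral_integral_swap hF

theorem taylor_integral_remainder_of_primitive {f f' f'' : ℝ → E} {a b : ℝ} (hab : a ≤ b)
    (hf : f b = f a + ∫ θ in a..b, f' θ)
    (hf' : ∀ θ ∈ Icc a b, f' θ = f' a + ∫ η in a..θ, f'' η)
    (hf'' : IntegrableOn f'' (Icc a b)) :
    f b = f a + (b - a) • f' a + ∫ η in a..b, (b - η) • f'' η := by
  have hprim : ContinuousOn (fun θ => ∫ η in a..θ, f'' η) (Icc a b) := by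
    have := intervalIntegral.continuousOn_primitive_interval (f := f'') (by rwa [uIcc_of_le hab])
    rwa [uIcc_of_le hab] at this
  rw [hf, intervalIntegral.integral_congr fun θ hθ => hf' θ (by rwa [uIcc_of_le hab] at hθ),
    intervalIntegral.integral_add intervalIntegrable_const (hprim.intervalIntegrable_of_Icc hab),
    intervalIntegral.integral_const,
    integral_primitive_eq_integral_sub_smul hab hf'', add_assoc]

end Integration

theorem Matrix.nonsing_inv_mulVec_mulVec_eq_neg {m n K : Type*} [Fintype m] [DecidableEq m]
    [Fintype n] [CommRing K] {B : Matrix m n K} {T : Matrix n m K} (hBT : IsUnit (B * T))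
    {c : m → K} {q : n → K} (h : B *ᵥ (T *ᵥ c + q) = 0) :
    (B * T)⁻¹ *ᵥ B *ᵥ q = -c := by
  have hq : B *ᵥ q = -((B * T) *ᵥ c) := by
    rw [mulVec_add, mulVec_mulVec] at h
    exact eq_neg_of_add_eq_zero_right h
  rw [hq, mulVec_neg, mulVec_mulVec, nonsing_inv_mul _ ((isUnit_iff_isUnit_det _).1 hBT),
    one_mulVec]

theorem PIop_apply_of_lower_eq_add_upper {ι κ : Type*} [Fintype ι] [Fintype κ] {a b s : ℝ}
    {M0 L : ℝ → Matrix κ ι ℝ} {M1 M2 : ℝ → ℝ → Matrix κ ι ℝ} {x : ℝ → ι → ℝ}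
    (hM1 : ∀ θ, M1 s θ = L θ + M2 s θ) (hs : s ∈ Icc a b)
    (hL : IntegrableOn (fun θ => L θ *ᵥ x θ) (Icc a b))
    (hM2 : IntegrableOn (fun θ => M2 s θ *ᵥ x θ) (Icc a b)) :
    PIop a b M0 M1 M2 x s =
      M0 s *ᵥ x s + (∫ θ in a..s, L θ *ᵥ x θ) + ∫ θ in a..b, M2 s θ *ᵥ x θ := by
  have ha : a ∈ Icc a b := left_mem_Icc.2 (hs.1.trans hs.2)
  have hb : b ∈ Icc a b := right_mem_Icc.2 (hs.1.trans hs.2)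
  have hsub {f : ℝ → κ → ℝ} (hf : IntegrableOn f (Icc a b)) {c d : ℝ} (hc : c ∈ Icc a b)
      (hd : d ∈ Icc a b) : IntervalIntegrable f volume c d :=
    (hf.mono_set (uIcc_subset_Icc hc hd)).intervalIntegrable
  simp only [PIop, hM1, add_mulVec]
  rw [intervalIntegral.integral_add (hsub hL ha hs) (hsub hM2 ha hs),
    ← intervalIntegral.integral_add_adjacent_intervals (hsub hM2 ha hs) (hsub hM2 hs hb)]
  abel

section FundamentalState

variable {n0 n1 n2 : ℕ} {a b : ℝ}

theorem continuous_Qmat : Continuous (Qmat n0 n1 n2 b) := by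
  refine continuous_matrix fun r c => ?_
  rcases r with i | i | i | i | i | i <;> rcases c with j | j | j <;>
    simp only [Qmat, of_apply] <;> (try split_ifs) <;> fun_prop

theorem continuous_G5fun (B : Matrix (BcI n1 n2) (BfI n1 n2) ℝ) (s : ℝ) :
    Continuous (G5fun n0 n1 n2 a b B s) :=
  (continuous_const.matrix_mul (continuous_const.matrix_mul
    (continuous_const.matrix_mul continuous_Qmat))).neg

theorem MeasureTheory.MemLp.stack3 {p : ℝ≥0∞} {μ : Measure ℝ} {x0 : ℝ → Fin n0 → ℝ}
    {x1 : ℝ → Fin n1 → ℝ} {x2 : ℝ → Fin n2 → ℝ} (h0 : MemLp x0 p μ) (h1 : MemLp x1 p μ)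
    (h2 : MemLp x2 p μ) : MemLp (stack3 x0 x1 x2) p μ :=
  memLp_pi_iff.2 fun
    | .inl i => h0.eval i
    | .inr (.inl i) => h1.eval i
    | .inr (.inr i) => h2.eval i

theorem G3mat_mulVec (u : Fin n0 → ℝ) (v : Fin n1 → ℝ) (w : Fin n2 → ℝ) :
    G3mat n0 n1 n2 *ᵥ Sum.elim u (Sum.elim v w) = Sum.elim v (0 : Fin n2 → ℝ) := by
  ext (i | i) <;> simp [G3mat, mulVec, dotProduct, Fintype.sum_sum_type]

theorem L4mat_mulVec (u : Fin n0 → ℝ) (v : Fin n1 → ℝ) (w : Fin n2 → ℝ) :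
    L4mat n0 n1 n2 *ᵥ Sum.elim u (Sum.elim v w) = Sum.elim (0 : Fin n1 → ℝ) w := by
  ext (i | i) <;> simp [L4mat, mulVec, dotProduct, Fintype.sum_sum_type]

theorem Vmat_mulVec (u : Fin n1 → ℝ) (v w : Fin n2 → ℝ) :
    Vmat n1 n2 *ᵥ Sum.elim u (Sum.elim v w) = Sum.elim (0 : Fin n1 → ℝ) w := by
  ext (i | i) <;> simp [Vmat, mulVec, dotProduct, Fintype.sum_sum_type]

theorem intervalIntegrable_Qmat_mulVec {x : ℝ → StI n0 n1 n2 → ℝ} (hab : a ≤ b)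
    (hx : IntegrableOn x (Icc a b)) :
    IntervalIntegrable (fun θ => Qmat n0 n1 n2 b θ *ᵥ x θ) volume a b :=
  (intervalIntegrable_iff_integrableOn_Icc_of_le hab).2
    (continuous_Qmat.continuousOn.integrableOn_mulVec hx isCompact_Icc)

theorem bfvec_eq_Tmat_mulVec_add_integral_Qmat {x0 : ℝ → Fin n0 → ℝ} {x1 x1' : ℝ → Fin n1 → ℝ}
    {x2 x2' x2'' : ℝ → Fin n2 → ℝ} (hab : a ≤ b)
    (hx : IntegrableOn (stack3 x0 x1' x2'') (Icc a b)) (h1 : IsH1 a b x1 x1')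
    (h2 : IsH2 a b x2 x2' x2'') :
    bfvec x1 x2 x2' a b = Tmat n1 n2 a b *ᵥ Sum.elim (x1 a) (Sum.elim (x2 a) (x2' a)) +
      ∫ θ in a..b, Qmat n0 n1 n2 b θ *ᵥ stack3 x0 x1' x2'' θ := by
  obtain ⟨hx1', hx1⟩ := h1
  obtain ⟨hx2, hx2'', hx2'⟩ := h2
  have hb : b ∈ Icc a b := right_mem_Icc.2 hab
  have hii {m : ℕ} {f : ℝ → Fin m → ℝ} (hf : MemLp f 2 (volume.restrict (Icc a b))) :
      IntervalIntegrable f volume a b :=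
    (intervalIntegrable_iff_integrableOn_Icc_of_le hab).2 (hf.integrable one_le_two)
  have htaylor := taylor_integral_remainder_of_primitive hab (hx2 b hb) hx2'
    (hx2''.integrable one_le_two)
  have hrem : IntervalIntegrable (fun θ => (b - θ) • x2'' θ) volume a b :=
    (hii hx2'').continuousOn_smul (by fun_prop)
  ext r
  rw [Pi.add_apply, intervalIntegral.eval_integral (intervalIntegrable_Qmat_mulVec hab hx)]
  rcases r with i | i | i | i | i | i <;>
    simp [bfvec, Tmat, Qmat, stack3, mulVec, dotProduct, Fintype.sum_sum_type]
  · simpa [intervalIntegral.eval_integral (hii hx1')] using congrFun (hx1 b hb) i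
  · simpa [intervalIntegral.eval_integral hrem] using congrFun htaylor i
  · simpa [intervalIntegral.eval_integral (hii hx2'')] using congrFun (hx2' b hb) i

theorem integral_G5fun_mulVec_stack3 {B : Matrix (BcI n1 n2) (BfI n1 n2) ℝ}
    (hBT : IsUnit (B * Tmat n1 n2 a b)) {x0 : ℝ → Fin n0 → ℝ} {x1 x1' : ℝ → Fin n1 → ℝ}
    {x2 x2' x2'' : ℝ → Fin n2 → ℝ} (hab : a ≤ b)
    (hx : IntegrableOn (stack3 x0 x1' x2'') (Icc a b)) (h1 : IsH1 a b x1 x1')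
    (h2 : IsH2 a b x2 x2' x2'') (hB : B *ᵥ bfvec x1 x2 x2' a b = 0) (s : ℝ) :
    ∫ θ in a..b, G5fun n0 n1 n2 a b B s θ *ᵥ stack3 x0 x1' x2'' θ =
      Sum.elim (0 : Fin n1 → ℝ) (x2' a) := by
  rw [bfvec_eq_Tmat_mulVec_add_integral_Qmat hab hx h1 h2] at hB
  have hG5 (θ : ℝ) (v : StI n0 n1 n2 → ℝ) : G5fun n0 n1 n2 a b B s θ *ᵥ v =
      -((Vmat n1 n2 * (B * Tmat n1 n2 a b)⁻¹ * B) *ᵥ (Qmat n0 n1 n2 b θ *ᵥ v)) := by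
    simp only [G5fun, neg_mulVec, mulVec_mulVec, Matrix.mul_assoc]
  simp only [hG5]
  rw [intervalIntegral.integral_neg,
    ← mulVec_intervalIntegral _ (intervalIntegrable_Qmat_mulVec hab hx), ← mulVec_mulVec,
    ← mulVec_mulVec, nonsing_inv_mulVec_mulVec_eq_neg hBT hB, mulVec_neg, neg_neg, Vmat_mulVec]

theorem Hcal_stack3_apply {B : Matrix (BcI n1 n2) (BfI n1 n2) ℝ}
    (hBT : IsUnit (B * Tmat n1 n2 a b)) {x0 : ℝ → Fin n0 → ℝ} {x1 x1' : ℝ → Fin n1 → ℝ}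
    {x2 x2' x2'' : ℝ → Fin n2 → ℝ} (hX : InX a b B x0 x1 x1' x2 x2' x2'') {s : ℝ}
    (hs : s ∈ Icc a b) :
    Hcal n0 n1 n2 a b B (stack3 x0 x1' x2'') s = Sum.elim (x1' s) (x2' s) := by
  obtain ⟨hx0, h1, h2, hB⟩ := hX
  have hab : a ≤ b := hs.1.trans hs.2
  have hx : IntegrableOn (stack3 x0 x1' x2'') (Icc a b) :=
    (hx0.stack3 h1.1 h2.2.1).integrable one_le_two
  have hsub {m : Type} [Fintype m] {f : ℝ → m → ℝ} (hf : IntegrableOn f (Icc a b)) :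
      IntervalIntegrable f volume a s :=
    (hf.mono_set (uIcc_subset_Icc (left_mem_Icc.2 hab) hs)).intervalIntegrable
  have hL4 := continuousOn_const (c := L4mat n0 n1 n2).integrableOn_mulVec hx isCompact_Icc
  rw [Hcal, PIop_apply_of_lower_eq_add_upper (fun _ => rfl) hs hL4
    ((continuous_G5fun B s).continuousOn.integrableOn_mulVec hx isCompact_Icc),
    integral_G5fun_mulVec_stack3 hBT hab hx h1 h2 hB]
  ext (i | i) <;> rw [Pi.add_apply, Pi.add_apply, intervalIntegral.eval_integral (hsub hL4)] <;>
    simp only [stack3, G3mat_mulVec, L4mat_mulVec]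
  · simp
  · simp [← intervalIntegral.eval_integral (hsub (h2.2.1.integrable one_le_two)), h2.2.2 s hs,
      add_comm]

end FundamentalState

theorem stmt8_general (a b : ℝ) (n0 n1 n2 : ℕ)
    (B : Matrix (BcI n1 n2) (BfI n1 n2) ℝ)
    (hBT : IsUnit (B * Tmat n1 n2 a b))
    (x0 : ℝ → Fin n0 → ℝ) (x1 x1' : ℝ → Fin n1 → ℝ) (x2 x2' x2'' : ℝ → Fin n2 → ℝ)
    (hX : InX a b B x0 x1 x1' x2 x2' x2'') :
    ∀ᵐ s ∂(volume.restrict (Icc a b)),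
      Sum.elim (x1' s) (x2' s) = Hcal n0 n1 n2 a b B (stack3 x0 x1' x2'') s :=
  ae_restrict_of_forall_mem measurableSet_Icc fun _ hs => (Hcal_stack3_apply hBT hX hs).symm

/-- for x ∈ X with fundamental state x̂ = (x0, x1', x2''),
one has (x1', x2') = ℋ x̂ in L². -/
theorem stmt8 (a b : ℝ) (hab : a < b) (n0 n1 n2 : ℕ)
    (B : Matrix (BcI n1 n2) (BfI n1 n2) ℝ)
    (hBT : IsUnit (B * Tmat n1 n2 a b))
    (x0 : ℝ → Fin n0 → ℝ) (x1 x1' : ℝ → Fin n1 → ℝ) (x2 x2' x2'' : ℝ → Fin n2 → ℝ)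
    (hX : InX a b B x0 x1 x1' x2 x2' x2'') :
    ∀ᵐ s ∂(volume.restrict (Icc a b)),
      Sum.elim (x1' s) (x2' s) = Hcal n0 n1 n2 a b B (stack3 x0 x1' x2'') s :=
  stmt8_general a b n0 n1 n2 B hBT x0 x1 x1' x2 x2' x2'' hX
end
end

section
/- Let a < b, n0, n1, n2 ∈ ℕ, and let B ∈ ℝ^{(n1+2n2)×(2n1+4n2)} be such that BT is invertible. If x = (x0, x1, x2) ∈ X satisfies x0 = 0 almost everywhere, x1' = 0 almost everywhere, and x2'' = 0 almost everywhere, then x1(s) = 0 and x2(s) = 0 for every s ∈ [a,b]. Consequently the bilinear form ⟨x,y⟩_X := ⟨x0,y0⟩_{L²} + ⟨x1',y1'⟩_{L²} + ⟨x2'',y2''⟩_{L²} is a genuine inner product on X. -/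
open MeasureTheory Set Matrix ENNReal

noncomputable section

/-!
Under the hypotheses of the first part, `x1` is constant, `x2'` is constant and `x2` is affine on
`[a, b]`, so the full boundary vector is `T` applied to the core boundary vector
`(x1 a, x2 a, x2' a)`. The boundary condition then says that `B T` kills the core vector, which
must vanish because `B T` is invertible; hence `x1 = 0` and `x2 = 0`. For the second part, each of
the three terms of `⟨x, x⟩_X` is nonnegative, so each vanishes, which forces `x0 = 0`, `x1' = 0`
and `x2'' = 0` almost everywhere, and the first part applies.
-/

theorem dotProduct_self_nonneg {ι R : Type*} [Fintype ι] [Ring R] [LinearOrder R]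
    [IsStrictOrderedRing R] (v : ι → R) : 0 ≤ v ⬝ᵥ v :=
  Finset.sum_nonneg fun i _ => mul_self_nonneg (v i)

section SquareIntegrable

variable {α ι : Type*} [MeasurableSpace α] [Fintype ι] {μ : Measure α} {u : α → ι → ℝ}

theorem MeasureTheory.MemLp.integrable_dotProduct_self (hu : MemLp u 2 μ) :
    Integrable (fun x => u x ⬝ᵥ u x) μ := by
  simp only [dotProduct, ← sq]
  exact integrable_finsetSum _ fun i _ => (memLp_pi_iff.mp hu i).integrable_sq

theorem MeasureTheory.MemLp.ae_eq_zero_of_integral_dotProduct_self_eq_zero (hu : MemLp u 2 μ)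
    (h : ∫ x, u x ⬝ᵥ u x ∂μ = 0) : ∀ᵐ x ∂μ, u x = 0 := by
  have hae := (integral_eq_zero_iff_of_nonneg (fun x => dotProduct_self_nonneg (u x))
    hu.integrable_dotProduct_self).mp h
  filter_upwards [hae] with x hx
  exact dotProduct_self_eq_zero.mp hx

end SquareIntegrable

section L2inner

variable {n : ℕ} {a b : ℝ}

theorem L2inner_self_nonneg (hab : a ≤ b) (u : ℝ → Fin n → ℝ) : 0 ≤ L2inner a b u u :=
  intervalIntegral.integral_nonneg hab fun s _ => dotProduct_self_nonneg (u s)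

theorem ae_eq_zero_of_L2inner_self_eq_zero (hab : a ≤ b) {u : ℝ → Fin n → ℝ}
    (hu : MemLp u 2 (volume.restrict (Icc a b))) (h : L2inner a b u u = 0) :
    ∀ᵐ s ∂(volume.restrict (Icc a b)), u s = 0 := by
  rw [← restrict_Ioc_eq_restrict_Icc] at hu ⊢
  rw [L2inner, intervalIntegral.integral_of_le hab] at h
  exact hu.ae_eq_zero_of_integral_dotProduct_self_eq_zero h

end L2inner

section Primitive

variable {E : Type*} [NormedAddCommGroup E] [NormedSpace ℝ E] {a b : ℝ} {x x' : ℝ → E}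

theorem eqOn_const_of_primitive_of_ae_eq_zero
    (hx : ∀ s ∈ Icc a b, x s = x a + ∫ η in a..s, x' η)
    (h' : ∀ᵐ s ∂(volume.restrict (Icc a b)), x' s = 0) :
    ∀ s ∈ Icc a b, x s = x a := by
  intro s hs
  rw [hx s hs, intervalIntegral.integral_of_le hs.1, integral_eq_zero_of_ae, add_zero]
  exact ae_restrict_of_ae_restrict_of_subset (Ioc_subset_Icc_self.trans
    (Icc_subset_Icc_right hs.2)) h'

theorem eqOn_affine_of_primitive_of_eqOn_const [CompleteSpace E]
    (hx : ∀ s ∈ Icc a b, x s = x a + ∫ η in a..s, x' η)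
    (h' : ∀ s ∈ Icc a b, x' s = x' a) :
    ∀ s ∈ Icc a b, x s = x a + (s - a) • x' a := by
  intro s hs
  rw [hx s hs, intervalIntegral.integral_congr (g := fun _ => x' a),
    intervalIntegral.integral_const]
  intro η hη
  rw [uIcc_of_le hs.1] at hη
  exact h' η ⟨hη.1, hη.2.trans hs.2⟩

end Primitive

theorem Tmat_mulVec {n1 n2 : ℕ} (a b : ℝ) (p : Fin n1 → ℝ) (q r : Fin n2 → ℝ) :
    Tmat n1 n2 a b *ᵥ Sum.elim p (Sum.elim q r) =
      Sum.elim p (Sum.elim p (Sum.elim q (Sum.elim (q + (b - a) • r) (Sum.elim r r)))) := by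
  funext i
  rcases i with i | i | i | i | i | i <;>
    simp [Tmat, mulVec, dotProduct, Fintype.sum_sum_type, mul_comm]

theorem InX.eqOn_zero_of_ae_deriv_eq_zero {a b : ℝ} (hab : a ≤ b) {n0 n1 n2 : ℕ}
    {B : Matrix (BcI n1 n2) (BfI n1 n2) ℝ} (hBT : IsUnit (B * Tmat n1 n2 a b))
    {x0 : ℝ → Fin n0 → ℝ} {x1 x1' : ℝ → Fin n1 → ℝ} {x2 x2' x2'' : ℝ → Fin n2 → ℝ}
    (hX : InX a b B x0 x1 x1' x2 x2' x2'')
    (h1 : ∀ᵐ s ∂(volume.restrict (Icc a b)), x1' s = 0)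
    (h2 : ∀ᵐ s ∂(volume.restrict (Icc a b)), x2'' s = 0) :
    ∀ s ∈ Icc a b, x1 s = 0 ∧ x2 s = 0 := by
  obtain ⟨-, ⟨-, hx1⟩, ⟨hx2, -, hx2'⟩, hbc⟩ := hX
  have hx1_const := eqOn_const_of_primitive_of_ae_eq_zero hx1 h1
  have hx2'_const := eqOn_const_of_primitive_of_ae_eq_zero hx2' h2
  have hx2_affine := eqOn_affine_of_primitive_of_eqOn_const hx2 hx2'_const
  have hb : b ∈ Icc a b := ⟨hab, le_rfl⟩
  have hcore : Sum.elim (x1 a) (Sum.elim (x2 a) (x2' a)) = 0 := by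
    have hbf : bfvec x1 x2 x2' a b =
        Tmat n1 n2 a b *ᵥ Sum.elim (x1 a) (Sum.elim (x2 a) (x2' a)) := by
      rw [Tmat_mulVec, bfvec, hx1_const b hb, hx2_affine b hb, hx2'_const b hb]
    refine mulVec_injective_iff_isUnit.mpr hBT ?_
    rw [mulVec_zero, ← mulVec_mulVec, ← hbf, hbc]
  rw [← Sum.elim_zero_zero, ← Sum.elim_zero_zero, Sum.elim_eq_iff, Sum.elim_eq_iff] at hcore
  obtain ⟨h1a, h2a, h2'a⟩ := hcore
  intro s hs
  rw [hx1_const s hs, hx2_affine s hs, h1a, h2a, h2'a]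
  simp

/-- if x ∈ X has vanishing fundamental state (x0 = 0 a.e., x1' = 0 a.e.,
x2'' = 0 a.e.) then x1 and x2 vanish identically on [a,b]; consequently the X-bilinear
form ⟨x,x⟩_X = 0 forces x to vanish, i.e. it is a genuine inner product on X. -/
theorem stmt10 (a b : ℝ) (hab : a < b) (n0 n1 n2 : ℕ)
    (B : Matrix (BcI n1 n2) (BfI n1 n2) ℝ)
    (hBT : IsUnit (B * Tmat n1 n2 a b))
    (x0 : ℝ → Fin n0 → ℝ) (x1 x1' : ℝ → Fin n1 → ℝ) (x2 x2' x2'' : ℝ → Fin n2 → ℝ)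
    (hX : InX a b B x0 x1 x1' x2 x2' x2'') :
    ((∀ᵐ s ∂(volume.restrict (Icc a b)), x0 s = 0) →
      (∀ᵐ s ∂(volume.restrict (Icc a b)), x1' s = 0) →
      (∀ᵐ s ∂(volume.restrict (Icc a b)), x2'' s = 0) →
      ∀ s ∈ Icc a b, x1 s = 0 ∧ x2 s = 0) ∧
    (L2inner a b x0 x0 + L2inner a b x1' x1' + L2inner a b x2'' x2'' = 0 →
      (∀ᵐ s ∂(volume.restrict (Icc a b)), x0 s = 0) ∧
      ∀ s ∈ Icc a b, x1 s = 0 ∧ x2 s = 0) := by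
  refine ⟨fun _ h1 h2 => hX.eqOn_zero_of_ae_deriv_eq_zero hab.le hBT h1 h2,
    fun hsum => ?_⟩
  have h0 := L2inner_self_nonneg hab.le x0
  have h1 := L2inner_self_nonneg hab.le x1'
  have h2 := L2inner_self_nonneg hab.le x2''
  refine ⟨ae_eq_zero_of_L2inner_self_eq_zero hab.le hX.1 (by linarith),
    hX.eqOn_zero_of_ae_deriv_eq_zero hab.le hBT ?_ ?_⟩
  · exact ae_eq_zero_of_L2inner_self_eq_zero hab.le hX.2.1.1 (by linarith)
  · exact ae_eq_zero_of_L2inner_self_eq_zero hab.le hX.2.2.1.2.1 (by linarith)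

end
end

section
/- Let a < b, n0, n1, n2 ∈ ℕ, and let B ∈ ℝ^{(n1+2n2)×(2n1+4n2)} be such that BT is invertible. For x = (x0,x1,x2) ∈ X define ‖x‖_X := ‖(x0, x1', x2'')‖_{L²} and ‖x‖_{L2×H1×H2} := ‖(0, x1, x2)‖_{L²} + ‖x2'‖_{L²} + ‖(x0, x1', x2'')‖_{L²}. Then for every x ∈ X, ‖x‖_X ≤ ‖x‖_{L2×H1×H2}, and there exists a constant c > 0 (depending only on a, b, B, n0, n1, n2) such that ‖x‖_{L2×H1×H2} ≤ c ‖x‖_X for every x ∈ X. Hence the two norms are equivalent on X. -/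
open MeasureTheory Set Matrix ENNReal

noncomputable section

/-! The boundary values `(x1(a), x2(a), x2'(a))` are controlled by the boundary condition:
the full boundary vector is `T` applied to them plus a remainder built from integrals of `x1'`
and `x2''`, so invertibility of `BT` bounds them by `‖x1'‖₁ + ‖x2''‖₁`. Integrating from `a`
then bounds `x1`, `x2` and `x2'` uniformly by the same quantity, and Cauchy–Schwarz on `[a, b]`
turns these `L¹` norms into the `L²` norm of `(x0, x1', x2'')`. -/

section SumElim

variable {ι κ E : Type*} [Fintype ι] [Fintype κ] [SeminormedAddCommGroup E] {u : ι → E} {v : κ → E}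

lemma norm_le_norm_sum_elim_left : ‖u‖ ≤ ‖Sum.elim u v‖ :=
  (pi_norm_le_iff_of_nonneg (norm_nonneg _)).2 fun i => norm_le_pi_norm (Sum.elim u v) (.inl i)

lemma norm_le_norm_sum_elim_right : ‖v‖ ≤ ‖Sum.elim u v‖ :=
  (pi_norm_le_iff_of_nonneg (norm_nonneg _)).2 fun i => norm_le_pi_norm (Sum.elim u v) (.inr i)

lemma norm_sum_elim_le {C : ℝ} (hu : ‖u‖ ≤ C) (hv : ‖v‖ ≤ C) : ‖Sum.elim u v‖ ≤ C := by
  refine (pi_norm_le_iff_of_nonneg ((norm_nonneg u).trans hu)).2 fun i => ?_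
  rcases i with i | i
  · exact (norm_le_pi_norm u i).trans hu
  · exact (norm_le_pi_norm v i).trans hv

end SumElim

section Primitive

variable {E : Type*} [NormedAddCommGroup E] [NormedSpace ℝ E] {f f' : ℝ → E} {a b s M : ℝ}

lemma continuousOn_of_eq_add_integral [CompleteSpace E] (hf' : IntegrableOn f' (Icc a b))
    (hf : ∀ s ∈ Icc a b, f s = f a + ∫ η in a..s, f' η) : ContinuousOn f (Icc a b) := by
  refine ((continuousOn_const (c := f a)).add
    (intervalIntegral.continuousOn_primitive hf')).congr fun s hs => ?_
  rw [hf s hs, intervalIntegral.integral_of_le hs.1, Pi.add_apply]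

lemma norm_sub_le_integral_norm_of_eq_add_integral (hf' : IntegrableOn f' (Icc a b))
    (hf : ∀ s ∈ Icc a b, f s = f a + ∫ η in a..s, f' η) (hs : s ∈ Icc a b) :
    ‖f s - f a‖ ≤ ∫ t in Icc a b, ‖f' t‖ := by
  rw [hf s hs, add_sub_cancel_left]
  calc ‖∫ η in a..s, f' η‖ ≤ ∫ η in a..s, ‖f' η‖ :=
        intervalIntegral.norm_integral_le_integral_norm hs.1
    _ = ∫ t in Ioc a s, ‖f' t‖ := intervalIntegral.integral_of_le hs.1
    _ ≤ ∫ t in Icc a b, ‖f' t‖ :=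
        setIntegral_mono_set hf'.norm (ae_of_all _ fun _ => norm_nonneg _)
          (Ioc_subset_Icc_self.trans (Icc_subset_Icc_right hs.2)).eventuallyLE

lemma norm_sub_le_mul_of_eq_add_integral (hf : ∀ s ∈ Icc a b, f s = f a + ∫ η in a..s, f' η)
    (hM : ∀ t ∈ Icc a b, ‖f' t‖ ≤ M) (hs : s ∈ Icc a b) : ‖f s - f a‖ ≤ (b - a) * M := by
  have hM0 : 0 ≤ M := (norm_nonneg _).trans (hM a ⟨le_rfl, hs.1.trans hs.2⟩)
  rw [hf s hs, add_sub_cancel_left]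
  refine (intervalIntegral.norm_integral_le_of_norm_le_const fun t ht => hM t ?_).trans ?_
  · rw [uIoc_of_le hs.1] at ht
    exact ⟨ht.1.le, ht.2.trans hs.2⟩
  · rw [abs_of_nonneg (sub_nonneg.2 hs.1), mul_comm]
    exact mul_le_mul_of_nonneg_right (by linarith [hs.2]) hM0

lemma norm_sub_sub_smul_le_of_eq_add_integral [CompleteSpace E] (hab : a ≤ b)
    (hf' : IntervalIntegrable f' volume a b)
    (hf : f b = f a + ∫ η in a..b, f' η) (hM : ∀ t ∈ Icc a b, ‖f' t - f' a‖ ≤ M) :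
    ‖f b - f a - (b - a) • f' a‖ ≤ (b - a) * M := by
  have hrem : f b - f a - (b - a) • f' a = ∫ η in a..b, (f' η - f' a) := by
    rw [intervalIntegral.integral_sub hf' intervalIntegrable_const,
      intervalIntegral.integral_const, hf]
    abel
  rw [hrem]
  refine (intervalIntegral.norm_integral_le_of_norm_le_const fun t ht => hM t ?_).trans ?_
  · rw [uIoc_of_le hab] at ht
    exact Ioc_subset_Icc_self ht
  · rw [abs_of_nonneg (sub_nonneg.2 hab), mul_comm]

end Primitive

section LpInterval

variable {α E : Type*} [MeasurableSpace α] [NormedAddCommGroup E] {μ : Measure α} {s : Set α}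
  {f : α → E}

lemma eLpNorm_restrict_le_of_forall_norm_le {p : ℝ≥0∞} {K : ℝ} (hs : MeasurableSet s)
    (hK : ∀ x ∈ s, ‖f x‖ ≤ K) :
    eLpNorm f p (μ.restrict s) ≤ μ s ^ p.toReal⁻¹ * ENNReal.ofReal K := by
  have h := eLpNorm_le_of_ae_bound (p := p) ((ae_restrict_iff' hs).2 (ae_of_all μ hK))
  rwa [Measure.restrict_apply_univ] at h

lemma ofReal_setIntegral_norm_le_eLpNorm_two (hf : AEStronglyMeasurable f (μ.restrict s)) :
    ENNReal.ofReal (∫ x in s, ‖f x‖ ∂μ) ≤ eLpNorm f 2 (μ.restrict s) * μ s ^ (2⁻¹ : ℝ) := by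
  calc ENNReal.ofReal (∫ x in s, ‖f x‖ ∂μ) = ‖∫ x in s, ‖f x‖ ∂μ‖ₑ :=
        (Real.enorm_of_nonneg (integral_nonneg fun _ => norm_nonneg _)).symm
    _ ≤ ∫⁻ x in s, ‖f x‖ₑ ∂μ := by
        simpa only [enorm_norm] using enorm_integral_le_lintegral_enorm (fun x => ‖f x‖)
    _ = eLpNorm f 1 (μ.restrict s) := eLpNorm_one_eq_lintegral_enorm.symm
    _ ≤ eLpNorm f 2 (μ.restrict s) * μ s ^ (2⁻¹ : ℝ) := by
        have h := eLpNorm_le_eLpNorm_mul_rpow_measure_univ (μ := μ.restrict s) one_le_two hf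
        rw [Measure.restrict_apply_univ] at h
        convert h using 3
        norm_num

lemma eLpNorm_two_restrict_le_of_norm_le_mul {C J : ℝ} {D : ℝ≥0∞} (hs : MeasurableSet s)
    (hC : 0 ≤ C) (hf : ∀ x ∈ s, ‖f x‖ ≤ C * J) (hJ : ENNReal.ofReal J ≤ D * μ s ^ (2⁻¹ : ℝ)) :
    eLpNorm f 2 (μ.restrict s) ≤ ENNReal.ofReal C * μ s * D := by
  calc eLpNorm f 2 (μ.restrict s) ≤ μ s ^ (2⁻¹ : ℝ) * ENNReal.ofReal (C * J) := by
        simpa using eLpNorm_restrict_le_of_forall_norm_le (p := 2) hs hf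
    _ ≤ μ s ^ (2⁻¹ : ℝ) * (ENNReal.ofReal C * (D * μ s ^ (2⁻¹ : ℝ))) := by
        rw [ENNReal.ofReal_mul hC]; gcongr
    _ = ENNReal.ofReal C * (μ s ^ (2⁻¹ : ℝ) * μ s ^ (2⁻¹ : ℝ)) * D := by ring
    _ = ENNReal.ofReal C * μ s * D := by
        rw [← ENNReal.rpow_add_of_nonneg _ _ (by norm_num) (by norm_num)]
        norm_num

end LpInterval

lemma Matrix.eq_neg_mulVec_of_mulVec_add_eq_zero {m n R : Type*} [Fintype m] [DecidableEq m]
    [Fintype n] [CommRing R] {B : Matrix m n R} {T : Matrix n m R} {c : m → R} {r : n → R}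
    (hBT : IsUnit (B * T)) (h : B *ᵥ (T *ᵥ c + r) = 0) : c = -(((B * T)⁻¹ * B) *ᵥ r) := by
  have hdet : IsUnit (B * T).det := (isUnit_iff_isUnit_det _).mp hBT
  have hc : (B * T) *ᵥ c = -(B *ᵥ r) := by
    rw [mulVec_add, mulVec_mulVec] at h
    exact eq_neg_of_add_eq_zero_left h
  calc c = ((B * T)⁻¹ * (B * T)) *ᵥ c := by rw [nonsing_inv_mul _ hdet, one_mulVec]
    _ = -(((B * T)⁻¹ * B) *ᵥ r) := by rw [← mulVec_mulVec, hc, mulVec_neg, mulVec_mulVec]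

section BoundaryValues

variable {n1 n2 : ℕ} {a b : ℝ} {x1 x1' : ℝ → Fin n1 → ℝ} {x2 x2' x2'' : ℝ → Fin n2 → ℝ}

/-- `Tmat` sends these values to the boundary vector `bfvec` of the Taylor polynomials
`x1(a)` and `x2(a) + (s - a) x2'(a)`. -/
def bcvec (x1 : ℝ → Fin n1 → ℝ) (x2 x2' : ℝ → Fin n2 → ℝ) (a : ℝ) : BcI n1 n2 → ℝ :=
  Sum.elim (x1 a) (Sum.elim (x2 a) (x2' a))

lemma bfvec_sub_Tmat_mulVec_bcvec (x1 : ℝ → Fin n1 → ℝ) (x2 x2' : ℝ → Fin n2 → ℝ) :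
    bfvec x1 x2 x2' a b - Tmat n1 n2 a b *ᵥ bcvec x1 x2 x2' a =
      Sum.elim (0 : Fin n1 → ℝ) (Sum.elim (x1 b - x1 a) (Sum.elim (0 : Fin n2 → ℝ)
        (Sum.elim (x2 b - x2 a - (b - a) • x2' a)
          (Sum.elim (0 : Fin n2 → ℝ) (x2' b - x2' a))))) := by
  funext k
  rcases k with k | k | k | k | k | k <;>
    simp [bfvec, bcvec, Tmat, mulVec, dotProduct, Fintype.sum_sum_type, ite_mul,
      Finset.sum_ite_eq, sub_sub]

lemma norm_bfvec_sub_Tmat_mulVec_bcvec_le (hab : a ≤ b) (hx1 : IsH1 a b x1 x1')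
    (hx2 : IsH2 a b x2 x2' x2'') :
    ‖bfvec x1 x2 x2' a b - Tmat n1 n2 a b *ᵥ bcvec x1 x2 x2' a‖ ≤
      (1 + (b - a)) * ((∫ t in Icc a b, ‖x1' t‖) + ∫ t in Icc a b, ‖x2'' t‖) := by
  obtain ⟨hx1'L2, hx1e⟩ := hx1
  obtain ⟨hx2e, hx2''L2, hx2'e⟩ := hx2
  have hx1'int : IntegrableOn x1' (Icc a b) := hx1'L2.integrable one_le_two
  have hx2''int : IntegrableOn x2'' (Icc a b) := hx2''L2.integrable one_le_two
  have hbmem : b ∈ Icc a b := right_mem_Icc.2 hab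
  set I1 := ∫ t in Icc a b, ‖x1' t‖
  set I2 := ∫ t in Icc a b, ‖x2'' t‖
  have hI1 : 0 ≤ I1 := integral_nonneg fun _ => norm_nonneg _
  have hI2 : 0 ≤ I2 := integral_nonneg fun _ => norm_nonneg _
  have hba : 0 ≤ b - a := sub_nonneg.2 hab
  have hx2'ii : IntervalIntegrable x2' volume a b :=
    ((continuousOn_of_eq_add_integral hx2''int hx2'e).mono
      (uIcc_of_le hab).le).intervalIntegrable
  have h1 : ‖x1 b - x1 a‖ ≤ I1 := norm_sub_le_integral_norm_of_eq_add_integral hx1'int hx1e hbmem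
  have h2' : ‖x2' b - x2' a‖ ≤ I2 :=
    norm_sub_le_integral_norm_of_eq_add_integral hx2''int hx2'e hbmem
  have h2 : ‖x2 b - x2 a - (b - a) • x2' a‖ ≤ (b - a) * I2 :=
    norm_sub_sub_smul_le_of_eq_add_integral hab hx2'ii (hx2e b hbmem) fun t ht =>
      norm_sub_le_integral_norm_of_eq_add_integral hx2''int hx2'e ht
  have h0 {ι : Type} [Fintype ι] : ‖(0 : ι → ℝ)‖ ≤ (1 + (b - a)) * (I1 + I2) := by
    rw [norm_zero]; positivity
  rw [bfvec_sub_Tmat_mulVec_bcvec]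
  refine norm_sum_elim_le h0 (norm_sum_elim_le (h1.trans ?_) (norm_sum_elim_le h0
    (norm_sum_elim_le (h2.trans ?_) (norm_sum_elim_le h0 (h2'.trans ?_))))) <;> nlinarith

end BoundaryValues

section SupBound

attribute [local instance] Matrix.linftyOpNormedAddCommGroup

variable {n0 n1 n2 : ℕ} {a b : ℝ} {B : Matrix (BcI n1 n2) (BfI n1 n2) ℝ}
  {x0 : ℝ → Fin n0 → ℝ} {x1 x1' : ℝ → Fin n1 → ℝ} {x2 x2' x2'' : ℝ → Fin n2 → ℝ}

-- The norm of `(BT)⁻¹B` is the `ℓ∞` operator norm.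
def supBoundConst (n1 n2 : ℕ) (a b : ℝ) (B : Matrix (BcI n1 n2) (BfI n1 n2) ℝ) : ℝ :=
  (1 + (b - a)) * (‖(B * Tmat n1 n2 a b)⁻¹ * B‖ * (1 + (b - a)) + 1)

lemma supBoundConst_nonneg (hab : a ≤ b) : 0 ≤ supBoundConst n1 n2 a b B := by
  have : 0 ≤ b - a := sub_nonneg.2 hab
  unfold supBoundConst; positivity

lemma norm_bcvec_le (hab : a ≤ b) (hBT : IsUnit (B * Tmat n1 n2 a b))
    (hx : InX a b B x0 x1 x1' x2 x2' x2'') :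
    ‖bcvec x1 x2 x2' a‖ ≤ ‖(B * Tmat n1 n2 a b)⁻¹ * B‖ *
      ((1 + (b - a)) * ((∫ t in Icc a b, ‖x1' t‖) + ∫ t in Icc a b, ‖x2'' t‖)) := by
  obtain ⟨-, hx1, hx2, hbc⟩ := hx
  have hsplit : bcvec x1 x2 x2' a = -(((B * Tmat n1 n2 a b)⁻¹ * B) *ᵥ
      (bfvec x1 x2 x2' a b - Tmat n1 n2 a b *ᵥ bcvec x1 x2 x2' a)) :=
    Matrix.eq_neg_mulVec_of_mulVec_add_eq_zero hBT (by rwa [add_sub_cancel])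
  rw [hsplit, norm_neg]
  exact (linfty_opNorm_mulVec _ _).trans (mul_le_mul_of_nonneg_left
    (norm_bfvec_sub_Tmat_mulVec_bcvec_le hab hx1 hx2) (norm_nonneg _))

lemma norm_le_supBoundConst_mul (hab : a ≤ b) (hBT : IsUnit (B * Tmat n1 n2 a b))
    (hx : InX a b B x0 x1 x1' x2 x2' x2'') {s : ℝ} (hs : s ∈ Icc a b) :
    ‖stack3 (fun (_ : ℝ) (_ : Fin n0) => (0 : ℝ)) x1 x2 s‖ ≤
        supBoundConst n1 n2 a b B * ((∫ t in Icc a b, ‖x1' t‖) + ∫ t in Icc a b, ‖x2'' t‖) ∧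
      ‖x2' s‖ ≤
        supBoundConst n1 n2 a b B * ((∫ t in Icc a b, ‖x1' t‖) + ∫ t in Icc a b, ‖x2'' t‖) := by
  have hbc := norm_bcvec_le hab hBT hx
  obtain ⟨-, ⟨hx1'L2, hx1e⟩, ⟨hx2e, hx2''L2, hx2'e⟩, -⟩ := hx
  set J := (∫ t in Icc a b, ‖x1' t‖) + ∫ t in Icc a b, ‖x2'' t‖
  set β := ‖bcvec x1 x2 x2' a‖
  have hI1 : 0 ≤ ∫ t in Icc a b, ‖x1' t‖ := integral_nonneg fun _ => norm_nonneg _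
  have hI2 : 0 ≤ ∫ t in Icc a b, ‖x2'' t‖ := integral_nonneg fun _ => norm_nonneg _
  have hba : 0 ≤ b - a := sub_nonneg.2 hab
  have hx1a : ‖x1 a‖ ≤ β := norm_le_norm_sum_elim_left
  have hx2a : ‖x2 a‖ ≤ β := norm_le_norm_sum_elim_left.trans norm_le_norm_sum_elim_right
  have hx2'a : ‖x2' a‖ ≤ β := norm_le_norm_sum_elim_right.trans norm_le_norm_sum_elim_right
  have hx2' : ∀ t ∈ Icc a b, ‖x2' t‖ ≤ β + J := fun t ht =>
    (norm_le_norm_add_norm_sub' _ _).trans <| add_le_add hx2'a <|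
      (norm_sub_le_integral_norm_of_eq_add_integral (hx2''L2.integrable one_le_two) hx2'e ht).trans
        (by linarith)
  have hx1 : ‖x1 s‖ ≤ β + J := (norm_le_norm_add_norm_sub' _ _).trans <| add_le_add hx1a <|
    (norm_sub_le_integral_norm_of_eq_add_integral (hx1'L2.integrable one_le_two) hx1e hs).trans
      (by linarith)
  have hx2 : ‖x2 s‖ ≤ β + (b - a) * (β + J) := (norm_le_norm_add_norm_sub' _ _).trans <|
    add_le_add hx2a (norm_sub_le_mul_of_eq_add_integral hx2e hx2' hs)
  have hC : (1 + (b - a)) * (β + J) ≤ supBoundConst n1 n2 a b B * J := by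
    unfold supBoundConst; nlinarith
  have hβ : 0 ≤ β := norm_nonneg _
  refine ⟨norm_sum_elim_le ?_ (norm_sum_elim_le ?_ ?_), (hx2' s hs).trans ?_⟩
  · exact norm_zero.le.trans (by nlinarith)
  all_goals nlinarith

end SupBound

lemma ofReal_integral_norm_add_le_eLpNorm_sum_elim {α : Type*} [MeasurableSpace α] {μ : Measure α}
    {s : Set α} {n0 n1 n2 : ℕ} {x0 : α → Fin n0 → ℝ} {x1 : α → Fin n1 → ℝ} {x2 : α → Fin n2 → ℝ}
    (hx1 : AEStronglyMeasurable x1 (μ.restrict s)) (hx2 : AEStronglyMeasurable x2 (μ.restrict s)) :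
    ENNReal.ofReal ((∫ t in s, ‖x1 t‖ ∂μ) + ∫ t in s, ‖x2 t‖ ∂μ) ≤
      2 * eLpNorm (fun t => Sum.elim (x0 t) (Sum.elim (x1 t) (x2 t))) 2 (μ.restrict s) *
        μ s ^ (2⁻¹ : ℝ) := by
  set D := eLpNorm (fun t => Sum.elim (x0 t) (Sum.elim (x1 t) (x2 t))) 2 (μ.restrict s)
  have h1 : eLpNorm x1 2 (μ.restrict s) ≤ D :=
    eLpNorm_mono fun t => norm_le_norm_sum_elim_left.trans norm_le_norm_sum_elim_right
  have h2 : eLpNorm x2 2 (μ.restrict s) ≤ D :=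
    eLpNorm_mono fun t => norm_le_norm_sum_elim_right.trans norm_le_norm_sum_elim_right
  rw [ENNReal.ofReal_add (integral_nonneg fun _ => norm_nonneg _)
    (integral_nonneg fun _ => norm_nonneg _), two_mul, add_mul]
  exact add_le_add ((ofReal_setIntegral_norm_le_eLpNorm_two hx1).trans (by gcongr))
    ((ofReal_setIntegral_norm_le_eLpNorm_two hx2).trans (by gcongr))

/-- on X, the norm ‖x‖_X = ‖(x0,x1',x2'')‖_{L²} and the norm
‖x‖_{L2×H1×H2} = ‖(0,x1,x2)‖_{L²} + ‖x2'‖_{L²} + ‖(x0,x1',x2'')‖_{L²} are equivalent. -/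
theorem stmt11 (a b : ℝ) (hab : a < b) (n0 n1 n2 : ℕ)
    (B : Matrix (BcI n1 n2) (BfI n1 n2) ℝ)
    (hBT : IsUnit (B * Tmat n1 n2 a b)) :
    (∀ (x0 : ℝ → Fin n0 → ℝ) (x1 x1' : ℝ → Fin n1 → ℝ) (x2 x2' x2'' : ℝ → Fin n2 → ℝ),
      InX a b B x0 x1 x1' x2 x2' x2'' →
        eLpNorm (stack3 x0 x1' x2'') 2 (volume.restrict (Icc a b)) ≤
          eLpNorm (stack3 (fun (_ : ℝ) (_ : Fin n0) => (0 : ℝ)) x1 x2) 2 (volume.restrict (Icc a b)) +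
            eLpNorm x2' 2 (volume.restrict (Icc a b)) +
            eLpNorm (stack3 x0 x1' x2'') 2 (volume.restrict (Icc a b))) ∧
    ∃ c : NNReal, 0 < c ∧
      ∀ (x0 : ℝ → Fin n0 → ℝ) (x1 x1' : ℝ → Fin n1 → ℝ) (x2 x2' x2'' : ℝ → Fin n2 → ℝ),
        InX a b B x0 x1 x1' x2 x2' x2'' →
          eLpNorm (stack3 (fun (_ : ℝ) (_ : Fin n0) => (0 : ℝ)) x1 x2) 2 (volume.restrict (Icc a b)) +
              eLpNorm x2' 2 (volume.restrict (Icc a b)) +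
              eLpNorm (stack3 x0 x1' x2'') 2 (volume.restrict (Icc a b)) ≤
            (c : ℝ≥0∞) * eLpNorm (stack3 x0 x1' x2'') 2 (volume.restrict (Icc a b)) := by
  refine ⟨fun _ _ _ _ _ _ _ => le_add_self, ?_⟩
  set C := supBoundConst n1 n2 a b B
  have hC : 0 ≤ C := supBoundConst_nonneg hab.le
  have hba : 0 ≤ b - a := sub_nonneg.2 hab.le
  refine ⟨(4 * C * (b - a) + 1).toNNReal, Real.toNNReal_pos.2 (by positivity), ?_⟩
  intro x0 x1 x1' x2 x2' x2'' hx
  have hbound := fun s (hs : s ∈ Icc a b) => norm_le_supBoundConst_mul hab.le hBT hx hs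
  obtain ⟨-, ⟨hx1', -⟩, ⟨-, hx2'', -⟩, -⟩ := hx
  set D := eLpNorm (stack3 x0 x1' x2'') 2 (volume.restrict (Icc a b))
  have hJ := ofReal_integral_norm_add_le_eLpNorm_sum_elim (x0 := x0) hx1'.1 hx2''.1
  have hL2 {E : Type} [NormedAddCommGroup E] {f : ℝ → E}
      (hf : ∀ s ∈ Icc a b, ‖f s‖ ≤ C * ((∫ t in Icc a b, ‖x1' t‖) + ∫ t in Icc a b, ‖x2'' t‖)) :
      eLpNorm f 2 (volume.restrict (Icc a b)) ≤ ENNReal.ofReal C * volume (Icc a b) * (2 * D) :=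
    eLpNorm_two_restrict_le_of_norm_le_mul measurableSet_Icc hC hf hJ
  calc _ ≤ ENNReal.ofReal C * volume (Icc a b) * (2 * D) +
          ENNReal.ofReal C * volume (Icc a b) * (2 * D) + D :=
        add_le_add_three (hL2 fun s hs => (hbound s hs).1) (hL2 fun s hs => (hbound s hs).2) le_rfl
    _ = ENNReal.ofReal (4 * C * (b - a) + 1) * D := by
        rw [Real.volume_Icc, ENNReal.ofReal_add (by positivity) zero_le_one,
          ENNReal.ofReal_mul (by positivity), ENNReal.ofReal_mul (by norm_num), ENNReal.ofReal_one,
          ENNReal.ofReal_ofNat]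
        ring

end
end
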